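/- Fix c ∈ [0,1] with k(c) > 0. Then x₀(c) > 0, H(x; c) > 0 for every x ≥ x₀(c), and there exists a unique real number β with H(β; c) = 0; moreover this unique zero satisfies β < x₀(c). -/

import Mathlib

open MeasureTheory Real Set Filter

/-- The (positive multiple of the) strictly decreasing fundamental solution `φ_λ` of the
Ornstein–Uhlenbeck equation `(1/2)σ² f'' + θ(μ - x) f' = λ f`, written as the integral
`φ(x) = ∫₀^∞ t^(λ/θ - 1) exp(-t²/2 - a t (x - μ)) dt` with `a = √(2θ)/σ`. -/
noncomputable def OUphi (lam th mu sig : ℝ) (x : ℝ) : ℝ :=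
  ∫ t in Set.Ioi (0:ℝ),
    t ^ (lam / th - 1) * Real.exp (-t ^ 2 / 2 - Real.sqrt (2 * th) / sig * t * (x - mu))

/-- `k(c) = λ + θ + λ Φ'(c)`. -/
noncomputable def kfun (lam th : ℝ) (Phi : ℝ → ℝ) (c : ℝ) : ℝ :=
  lam + th + lam * deriv Phi c

/-- `G(x; c) = μ(k(c) - θ)/λ + k(c)(x - μ)/(λ + θ)`. -/
noncomputable def Gfun (lam th mu : ℝ) (Phi : ℝ → ℝ) (x c : ℝ) : ℝ :=
  mu * (kfun lam th Phi c - th) / lam + kfun lam th Phi c * (x - mu) / (lam + th)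

/-- `x₀(c) = -θμΦ'(c)/k(c)`. -/
noncomputable def x0fun (lam th mu : ℝ) (Phi : ℝ → ℝ) (c : ℝ) : ℝ :=
  -(th * mu * deriv Phi c) / kfun lam th Phi c

/-- The smooth-fit function `H(x;c) = (k(c)/(λ+θ)) φ(x) - G(x;c) φ'(x)`. -/
noncomputable def Hfun (lam th mu sig : ℝ) (Phi : ℝ → ℝ) (x c : ℝ) : ℝ :=
  kfun lam th Phi c / (lam + th) * OUphi lam th mu sig x
    - Gfun lam th mu Phi x c * deriv (OUphi lam th mu sig) x

/-! With `ν = λ/θ`, `r = a(μ - x)` and `I_p(r) = ∫₀^∞ t^p exp(-t²/2 + r t) dt` (`gaussMoment`),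
one has `φ(x) = I_{ν-1}(r)`, `φ'(x) = -a I_ν(r)` and `I_p' = I_{p+1}`. Since
`G(x; c) = k(c)/(λ+θ) · (x - x₀(c))`, `H(x; c)` is the positive multiple `k(c)/(λ+θ)` of
`F(r) = I_{ν-1}(r) + (s - r) I_ν(r)` (`smoothFit`) with `s = a(μ - x₀(c))`. Clearly `F > 0`
on `r ≤ s`, and `F'(r) = (s - r) I_{ν+1}(r) < 0` on `r > s`; the comparison
`I_{ν-1} ≤ (e²/ν + 1) I_ν` on `r ≥ 0` makes `F` negative for large `r`. So `F` has exactly one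
zero, and it lies in `r > s`, i.e. `x < x₀(c)`. -/

noncomputable def gaussMoment (p r : ℝ) : ℝ :=
  ∫ t in Ioi (0:ℝ), t ^ p * exp (-t ^ 2 / 2 + r * t)

lemma integrableOn_rpow_mul_exp_neg_sq_add {p : ℝ} (hp : -1 < p) (r : ℝ) :
    IntegrableOn (fun t : ℝ => t ^ p * exp (-t ^ 2 / 2 + r * t)) (Ioi 0) := by
  refine ((integrableOn_rpow_mul_exp_neg_mul_sq (b := 1 / 4) (by norm_num) hp).const_mul
    (exp (r ^ 2))).mono' ?_ ?_
  · exact ((continuousOn_id.rpow_const fun t ht => Or.inl (ne_of_gt ht)).mul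
      (by fun_prop)).aestronglyMeasurable measurableSet_Ioi
  · filter_upwards [ae_restrict_mem measurableSet_Ioi] with t (ht : 0 < t)
    have hexp : exp (-t ^ 2 / 2 + r * t) ≤ exp (r ^ 2) * exp (-(1 / 4) * t ^ 2) := by
      rw [← exp_add, exp_le_exp]
      nlinarith [sq_nonneg (t / 2 - r)]
    rw [norm_of_nonneg (by positivity), mul_left_comm]
    exact mul_le_mul_of_nonneg_left hexp (rpow_nonneg ht.le p)

lemma gaussMoment_pos {p : ℝ} (hp : -1 < p) (r : ℝ) : 0 < gaussMoment p r := by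
  set f : ℝ → ℝ := fun t => t ^ p * exp (-t ^ 2 / 2 + r * t)
  have hnonneg : 0 ≤ᵐ[volume.restrict (Ioi 0)] f := by
    filter_upwards [ae_restrict_mem measurableSet_Ioi] with t (ht : 0 < t)
    positivity
  rw [gaussMoment, setIntegral_pos_iff_support_of_nonneg_ae hnonneg
    (integrableOn_rpow_mul_exp_neg_sq_add hp r)]
  have hsupp : Ioi (0:ℝ) ⊆ Function.support f ∩ Ioi 0 :=
    fun t (ht : 0 < t) => ⟨(mul_pos (rpow_pos_of_pos ht p) (exp_pos _)).ne', ht⟩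
  exact (measure_mono hsupp).trans_lt' (by simp)

lemma hasDerivAt_gaussMoment {p : ℝ} (hp : -1 < p) (r₀ : ℝ) :
    HasDerivAt (gaussMoment p) (gaussMoment (p + 1) r₀) r₀ := by
  have hcont : ∀ r, ContinuousOn (fun t : ℝ => t ^ p * exp (-t ^ 2 / 2 + r * t)) (Ioi 0) :=
    fun r => (continuousOn_id.rpow_const fun t ht => Or.inl (ne_of_gt ht)).mul (by fun_prop)
  have hderiv : EqOn (fun t : ℝ => t * (t ^ p * exp (-t ^ 2 / 2 + r₀ * t)))
      (fun t => t ^ (p + 1) * exp (-t ^ 2 / 2 + r₀ * t)) (Ioi 0) := fun t (ht : 0 < t) => by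
    simp only [rpow_add_one ht.ne']
    ring
  have key := hasDerivAt_integral_of_dominated_loc_of_deriv_le
    (μ := volume.restrict (Ioi 0)) (x₀ := r₀)
    (F := fun r t => t ^ p * exp (-t ^ 2 / 2 + r * t))
    (F' := fun r t => t * (t ^ p * exp (-t ^ 2 / 2 + r * t)))
    (bound := fun t => t ^ (p + 1) * exp (-t ^ 2 / 2 + (r₀ + 1) * t))
    (Metric.ball_mem_nhds r₀ one_pos)
    (Eventually.of_forall fun r => (hcont r).aestronglyMeasurable measurableSet_Ioi)
    (integrableOn_rpow_mul_exp_neg_sq_add hp r₀)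
    ((continuousOn_id.mul (hcont r₀)).aestronglyMeasurable measurableSet_Ioi)
    ?_ (integrableOn_rpow_mul_exp_neg_sq_add (by linarith) (r₀ + 1)) ?_
  · have h := key.2
    rwa [setIntegral_congr_fun measurableSet_Ioi hderiv] at h
  · filter_upwards [ae_restrict_mem measurableSet_Ioi] with t (ht : 0 < t) r hr
    have hr' : r ≤ r₀ + 1 := by
      rw [Metric.mem_ball, Real.dist_eq] at hr
      linarith [le_abs_self (r - r₀)]
    rw [norm_of_nonneg (by positivity), rpow_add_one ht.ne', mul_comm (t ^ p) t, mul_assoc]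
    gcongr
  · filter_upwards with t r _
    exact (((hasDerivAt_mul_const t).const_add (-t ^ 2 / 2)).exp.const_mul (t ^ p)).congr_deriv
      (by ring)

lemma exp_sub_two_le_gaussMoment {ν r : ℝ} (hν : 0 ≤ ν) (hr : 0 ≤ r) :
    exp (r - 2) ≤ gaussMoment ν r := by
  have hint := integrableOn_rpow_mul_exp_neg_sq_add (by linarith : (-1:ℝ) < ν) r
  have hle_Ioc : exp (r - 2) ≤ ∫ t in Ioc (1:ℝ) 2, t ^ ν * exp (-t ^ 2 / 2 + r * t) := by
    calc exp (r - 2) = ∫ _ in Ioc (1:ℝ) 2, exp (r - 2) := by norm_num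
      _ ≤ ∫ t in Ioc (1:ℝ) 2, t ^ ν * exp (-t ^ 2 / 2 + r * t) := by
        refine setIntegral_mono_on (integrableOn_const (by simp))
          (hint.mono_set fun t ht => one_pos.trans ht.1) measurableSet_Ioc
          fun t ⟨ht1, ht2⟩ => ?_
        have hexp : exp (r - 2) ≤ exp (-t ^ 2 / 2 + r * t) :=
          exp_le_exp.mpr (by nlinarith [mul_nonneg hr (sub_nonneg.mpr ht1.le)])
        nlinarith [one_le_rpow ht1.le hν, exp_pos (-t ^ 2 / 2 + r * t)]
  refine hle_Ioc.trans (setIntegral_mono_set hint ?_ ?_)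
  · filter_upwards [ae_restrict_mem measurableSet_Ioi] with t (ht : 0 < t)
    positivity
  · exact (show Ioc (1:ℝ) 2 ⊆ Ioi 0 from fun t ht => one_pos.trans ht.1).eventuallyLE

lemma gaussMoment_sub_one_le {ν r : ℝ} (hν : 0 < ν) (hr : 0 ≤ r) :
    gaussMoment (ν - 1) r ≤ exp r / ν + gaussMoment ν r := by
  set f : ℝ → ℝ := fun t => t ^ (ν - 1) * exp (-t ^ 2 / 2 + r * t)
  have hint : IntegrableOn f (Ioi 0) := integrableOn_rpow_mul_exp_neg_sq_add (by linarith) r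
  have hintν := integrableOn_rpow_mul_exp_neg_sq_add (by linarith : (-1:ℝ) < ν) r
  have hsplit : gaussMoment (ν - 1) r = (∫ t in Ioc (0:ℝ) 1, f t) + ∫ t in Ioi (1:ℝ), f t := by
    rw [gaussMoment, ← setIntegral_union (Ioc_disjoint_Ioi le_rfl) measurableSet_Ioi
      (hint.mono_set Ioc_subset_Ioi_self) (hint.mono_set (Ioi_subset_Ioi zero_le_one)),
      Ioc_union_Ioi_eq_Ioi zero_le_one]
  have hnear : (∫ t in Ioc (0:ℝ) 1, f t) ≤ exp r / ν := by
    have hpow : IntegrableOn (fun t : ℝ => t ^ (ν - 1)) (Ioc 0 1) := by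
      rw [← intervalIntegrable_iff_integrableOn_Ioc_of_le zero_le_one]
      exact intervalIntegral.intervalIntegrable_rpow' (by linarith)
    calc (∫ t in Ioc (0:ℝ) 1, f t) ≤ ∫ t in Ioc (0:ℝ) 1, t ^ (ν - 1) * exp r := by
          refine setIntegral_mono_on (hint.mono_set Ioc_subset_Ioi_self) (hpow.mul_const _)
            measurableSet_Ioc fun t ⟨ht0, ht1⟩ => ?_
          refine mul_le_mul_of_nonneg_left (exp_le_exp.mpr ?_) (rpow_nonneg ht0.le _)
          nlinarith [mul_nonneg hr (sub_nonneg.mpr ht1)]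
      _ = exp r / ν := by
          rw [integral_mul_const, ← intervalIntegral.integral_of_le zero_le_one,
            integral_rpow (Or.inl (by linarith)), sub_add_cancel, zero_rpow hν.ne', one_rpow]
          ring
  have hfar : (∫ t in Ioi (1:ℝ), f t) ≤ gaussMoment ν r := by
    calc (∫ t in Ioi (1:ℝ), f t)
        ≤ ∫ t in Ioi (1:ℝ), t ^ ν * exp (-t ^ 2 / 2 + r * t) := by
          refine setIntegral_mono_on (hint.mono_set (Ioi_subset_Ioi zero_le_one))
            (hintν.mono_set (Ioi_subset_Ioi zero_le_one)) measurableSet_Ioi fun t ht => ?_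
          exact mul_le_mul_of_nonneg_right
            (rpow_le_rpow_of_exponent_le (le_of_lt ht) (by linarith)) (exp_nonneg _)
      _ ≤ gaussMoment ν r := by
          refine setIntegral_mono_set hintν ?_ (Ioi_subset_Ioi zero_le_one).eventuallyLE
          filter_upwards [ae_restrict_mem measurableSet_Ioi] with t (ht : 0 < t)
          positivity
  linarith

lemma gaussMoment_sub_one_le_mul {ν r : ℝ} (hν : 0 < ν) (hr : 0 ≤ r) :
    gaussMoment (ν - 1) r ≤ (exp 2 / ν + 1) * gaussMoment ν r := by
  have hexp : exp r / ν = exp 2 / ν * exp (r - 2) := by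
    rw [← mul_div_right_comm, ← exp_add, add_sub_cancel]
  have hlow := mul_le_mul_of_nonneg_left (exp_sub_two_le_gaussMoment hν.le hr)
    (div_pos (exp_pos 2) hν).le
  linarith [gaussMoment_sub_one_le hν hr]

lemma existsUnique_eq_zero_of_strictAntiOn_Ici {f : ℝ → ℝ} {s : ℝ} (hf : Continuous f)
    (hpos : ∀ r ≤ s, 0 < f r) (hanti : StrictAntiOn f (Ici s)) (hneg : ∃ r, f r < 0) :
    ∃! r, f r = 0 := by
  have hzero_gt : ∀ r, f r = 0 → s < r := fun r hr =>
    lt_of_not_ge fun hrs => (hpos r hrs).ne' hr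
  obtain ⟨r₁, hr₁⟩ := hneg
  have hsr₁ : s ≤ r₁ := le_of_not_ge fun h => lt_asymm (hpos r₁ h) hr₁
  obtain ⟨r, hr, hr0⟩ := intermediate_value_Icc' hsr₁ hf.continuousOn
    ⟨hr₁.le, (hpos s le_rfl).le⟩
  refine ⟨r, hr0, fun y hy => hanti.injOn (hzero_gt y hy).le (hzero_gt r hr0).le ?_⟩
  rw [hy, hr0]

noncomputable def smoothFit (ν s r : ℝ) : ℝ :=
  gaussMoment (ν - 1) r + (s - r) * gaussMoment ν r

lemma smoothFit_pos_of_le {ν : ℝ} (hν : 0 < ν) (s : ℝ) {r : ℝ} (hr : r ≤ s) :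
    0 < smoothFit ν s r :=
  add_pos_of_pos_of_nonneg (gaussMoment_pos (by linarith) r)
    (mul_nonneg (sub_nonneg.mpr hr) (gaussMoment_pos (by linarith) r).le)

lemma hasDerivAt_smoothFit {ν : ℝ} (hν : 0 < ν) (s r : ℝ) :
    HasDerivAt (smoothFit ν s) ((s - r) * gaussMoment (ν + 1) r) r := by
  have h₁ := hasDerivAt_gaussMoment (p := ν - 1) (by linarith) r
  rw [sub_add_cancel] at h₁
  exact (h₁.add (((hasDerivAt_id r).const_sub s).mul
    (hasDerivAt_gaussMoment (by linarith) r))).congr_deriv (by simp only [id_eq]; ring)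

lemma strictAntiOn_smoothFit {ν : ℝ} (hν : 0 < ν) (s : ℝ) :
    StrictAntiOn (smoothFit ν s) (Ici s) := by
  refine strictAntiOn_of_deriv_neg (convex_Ici s)
    (fun r _ => (hasDerivAt_smoothFit hν s r).continuousAt.continuousWithinAt) fun r hr => ?_
  rw [interior_Ici, mem_Ioi] at hr
  rw [(hasDerivAt_smoothFit hν s r).deriv]
  exact mul_neg_of_neg_of_pos (by linarith) (gaussMoment_pos (by linarith) r)

lemma exists_smoothFit_neg {ν : ℝ} (hν : 0 < ν) (s : ℝ) : ∃ r, smoothFit ν s r < 0 := by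
  set R := |s| + (exp 2 / ν + 1) + 1
  have hR : 0 ≤ R := by positivity
  have hI := gaussMoment_pos (p := ν) (by linarith) R
  refine ⟨R, ?_⟩
  calc smoothFit ν s R ≤ (s - |s| - 1) * gaussMoment ν R := by
        unfold smoothFit
        linear_combination gaussMoment_sub_one_le_mul hν hR
    _ < 0 := mul_neg_of_neg_of_pos (by linarith [le_abs_self s]) hI

lemma existsUnique_smoothFit_eq_zero {ν : ℝ} (hν : 0 < ν) (s : ℝ) :
    ∃! r, smoothFit ν s r = 0 :=
  existsUnique_eq_zero_of_strictAntiOn_Ici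
    (continuous_iff_continuousAt.mpr fun r => (hasDerivAt_smoothFit hν s r).continuousAt)
    (fun _ => smoothFit_pos_of_le hν s) (strictAntiOn_smoothFit hν s) (exists_smoothFit_neg hν s)

lemma OUphi_eq_gaussMoment (lam th mu sig x : ℝ) :
    OUphi lam th mu sig x = gaussMoment (lam / th - 1) (√(2 * th) / sig * (mu - x)) := by
  unfold OUphi gaussMoment
  congr! 4 with t
  ring

lemma hasDerivAt_OUphi {lam th : ℝ} (hν : 0 < lam / th) (mu sig x : ℝ) :
    HasDerivAt (OUphi lam th mu sig)
      (-(√(2 * th) / sig) * gaussMoment (lam / th) (√(2 * th) / sig * (mu - x))) x := by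
  have h := (hasDerivAt_gaussMoment (p := lam / th - 1) (by linarith)
    (√(2 * th) / sig * (mu - x))).comp x
    (((hasDerivAt_id x).const_sub mu).const_mul (√(2 * th) / sig))
  rw [sub_add_cancel] at h
  rw [funext (OUphi_eq_gaussMoment lam th mu sig)]
  refine h.congr_deriv ?_
  ring

lemma Gfun_eq {lam th : ℝ} (hlam : lam ≠ 0) (hlt : lam + th ≠ 0) (mu : ℝ) {Phi : ℝ → ℝ}
    {c : ℝ} (hk : kfun lam th Phi c ≠ 0) (x : ℝ) :
    Gfun lam th mu Phi x c = kfun lam th Phi c / (lam + th) * (x - x0fun lam th mu Phi c) := by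
  unfold Gfun x0fun
  unfold kfun at *
  field_simp
  ring

lemma Hfun_eq {lam th : ℝ} (hlam : 0 < lam) (hth : 0 < th) (mu sig : ℝ) {Phi : ℝ → ℝ}
    {c : ℝ} (hk : kfun lam th Phi c ≠ 0) (x : ℝ) :
    Hfun lam th mu sig Phi x c = kfun lam th Phi c / (lam + th) *
      smoothFit (lam / th) (√(2 * th) / sig * (mu - x0fun lam th mu Phi c))
        (√(2 * th) / sig * (mu - x)) := by
  rw [Hfun, (hasDerivAt_OUphi (div_pos hlam hth) mu sig x).deriv, OUphi_eq_gaussMoment,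
    Gfun_eq hlam.ne' (by linarith) mu hk, smoothFit]
  ring

lemma x0fun_pos {lam th mu : ℝ} (hth : 0 < th) (hmu : 0 < mu) {Phi : ℝ → ℝ} {c : ℝ}
    (hPhi' : deriv Phi c < 0) (hk : 0 < kfun lam th Phi c) : 0 < x0fun lam th mu Phi c :=
  div_pos (by nlinarith [mul_pos hth hmu]) hk

theorem statement5_general (lam th mu sig : ℝ)
    (hlam : 0 < lam) (hth : 0 < th) (hmu : 0 < mu) (hsig : 0 < sig)
    (Phi : ℝ → ℝ)
    (hPhi' : ∀ c ∈ Set.Icc (0:ℝ) 1, deriv Phi c < 0)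
    (c : ℝ) (hc : c ∈ Set.Icc (0:ℝ) 1) (hk : 0 < kfun lam th Phi c) :
    0 < x0fun lam th mu Phi c ∧
    (∀ x : ℝ, x0fun lam th mu Phi c ≤ x → 0 < Hfun lam th mu sig Phi x c) ∧
    (∃! b : ℝ, Hfun lam th mu sig Phi b c = 0) ∧
    (∀ b : ℝ, Hfun lam th mu sig Phi b c = 0 → b < x0fun lam th mu Phi c) := by
  have hν : 0 < lam / th := div_pos hlam hth
  have hA : 0 < √(2 * th) / sig := div_pos (sqrt_pos.mpr (by linarith)) hsig
  have hK : 0 < kfun lam th Phi c / (lam + th) := div_pos hk (by linarith)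
  set A := √(2 * th) / sig
  set x₀ := x0fun lam th mu Phi c
  have hH := Hfun_eq hlam hth mu sig hk.ne'
  have hzero : ∀ b, Hfun lam th mu sig Phi b c = 0 ↔
      smoothFit (lam / th) (A * (mu - x₀)) (A * (mu - b)) = 0 := fun b => by
    rw [hH, mul_eq_zero, or_iff_right hK.ne']
  have hlt : ∀ b, Hfun lam th mu sig Phi b c = 0 → b < x₀ := fun b hb => by
    by_contra! hxb
    exact (smoothFit_pos_of_le hν _ (by gcongr)).ne' ((hzero b).mp hb)
  obtain ⟨r, hr, hr_unique⟩ := existsUnique_smoothFit_eq_zero hν (A * (mu - x₀))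
  refine ⟨x0fun_pos hth hmu (hPhi' c hc) hk, fun x hx => ?_,
    ⟨mu - r / A, ?_, fun b hb => ?_⟩, hlt⟩
  · rw [hH]
    exact mul_pos hK (smoothFit_pos_of_le hν _ (by gcongr))
  · refine (hzero _).mpr ?_
    rwa [sub_sub_cancel, mul_div_cancel₀ r hA.ne']
  · rw [← hr_unique _ ((hzero b).mp hb), mul_div_cancel_left₀ _ hA.ne']
    ring

/-- if `c ∈ [0,1]` and `k(c) > 0` then `x₀(c) > 0`, `H(x;c) > 0` for all
`x ≥ x₀(c)`, and `H(·;c)` has a unique real zero `β`, which moreover satisfies `β < x₀(c)`. -/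
theorem statement5 (lam th mu sig : ℝ)
    (hlam : 0 < lam) (hth : 0 < th) (hmu : 0 < mu) (hsig : 0 < sig)
    (Phi : ℝ → ℝ) (hPhiC2 : ContDiff ℝ 2 Phi)
    (hPhiconv : StrictConvexOn ℝ Set.univ Phi)
    (hPhi' : ∀ c ∈ Set.Icc (0:ℝ) 1, deriv Phi c < 0) (hPhi1 : Phi 1 = 0)
    (c : ℝ) (hc : c ∈ Set.Icc (0:ℝ) 1) (hk : 0 < kfun lam th Phi c) :
    0 < x0fun lam th mu Phi c ∧
    (∀ x : ℝ, x0fun lam th mu Phi c ≤ x → 0 < Hfun lam th mu sig Phi x c) ∧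
    (∃! b : ℝ, Hfun lam th mu sig Phi b c = 0) ∧
    (∀ b : ℝ, Hfun lam th mu sig Phi b c = 0 → b < x0fun lam th mu Phi c) :=
  statement5_general lam th mu sig hlam hth hmu hsig Phi hPhi' c hc hk
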